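/- arXiv:2111.14986 — 2 statements merged into one kernel-verified Lean document; each statement's English description precedes it below -/
import Mathlib

section
/- Let D be a finite oriented graph with n vertices and minimum feedback vertex set size f = f(D), let R be a nonempty bad set of D, and let r' be a vertex of D not in R. Let D_{r'×|R|} be the oriented graph obtained from D by replacing r' with a stable (independent) set S of |R| new vertices, each having exactly the same in-neighbors and out-neighbors as r'. Suppose the underlying undirected graph of D_{r'×|R|} admits a vertex ordering in which all vertices of S precede all other vertices and every vertex has at most k neighbors preceding it. Then for every natural number i there exists a finite oriented graph D_i with exactly n + i(n−1) vertices such that f(D_i) ≥ (i+1)·f and the underlying undirected graph of D_i is k-degenerate; moreover, if R is a minimal bad set, then f(D_i) = (i+1)·f. -/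
/-- A simple graph is `k`-degenerate if every nonempty (induced) subgraph has a
vertex of degree at most `k`. -/
def Degenerate {V : Type*} (G : SimpleGraph V) (k : ℕ) : Prop :=
  ∀ s : Set V, s.Nonempty → ∃ v ∈ s, (s ∩ G.neighborSet v).ncard ≤ k

/-- `F` is a feedback vertex set of the digraph given by the arc relation `A`. -/
def DirFVS {V : Type*} (A : V → V → Prop) (F : Set V) : Prop :=
  ∀ v : V, ¬ Relation.TransGen (fun x y => x ∉ F ∧ y ∉ F ∧ A x y) v v

/-- `dirFvsNum A` is the minimum size of a directed feedback vertex set. -/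
noncomputable def dirFvsNum {V : Type*} [Fintype V] (A : V → V → Prop) : ℕ :=
  sInf {n | ∃ F : Set V, DirFVS A F ∧ F.ncard = n}

/-- A minimum feedback vertex set. -/
def IsMinFVS {V : Type*} [Fintype V] (A : V → V → Prop) (F : Set V) : Prop :=
  DirFVS A F ∧ F.ncard = dirFvsNum A

/-- A set is bad if it is contained in no minimum feedback vertex set. -/
def BadSet {V : Type*} [Fintype V] (A : V → V → Prop) (R : Set V) : Prop :=
  ∀ F : Set V, IsMinFVS A F → ¬ R ⊆ F

/-- A bad set is minimal if for every `r ∈ R` there is a minimum feedback vertex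
set `F` with `R \ F = {r}`. -/
def MinimalBadSet {V : Type*} [Fintype V] (A : V → V → Prop) (R : Set V) : Prop :=
  BadSet A R ∧ ∀ r ∈ R, ∃ F : Set V, IsMinFVS A F ∧ R \ F = {r}

/-- The digraph `D_{r'×|R|}` obtained from `D = (V, A)` by replacing the vertex `r'`
with a stable set of `|R|` new vertices, each with precisely the same in- and
out-neighbors as `r'`. -/
def blowup {V : Type*} [DecidableEq V] (A : V → V → Prop) (R : Set V) (r' : V) :
    ({v : V // v ≠ r'} ⊕ Fin (R.ncard)) → ({v : V // v ≠ r'} ⊕ Fin (R.ncard)) → Prop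
  | Sum.inl u, Sum.inl v => A u.1 v.1
  | Sum.inl u, Sum.inr _ => A u.1 r'
  | Sum.inr _, Sum.inl v => A r' v.1
  | Sum.inr _, Sum.inr _ => False

section Aux
namespace Stmt16

lemma transGen_exists_step {W : Type*} {r : W → W → Prop} :
    ∀ {a b : W}, Relation.TransGen r a b → ∃ x y, r x y := by
  intro a b h
  induction h with
  | single h => exact ⟨_, _, h⟩
  | tail _ h _ => exact ⟨_, _, h⟩

lemma dirFVS_univ {V : Type*} (A : V → V → Prop) : DirFVS A Set.univ := by
  intro v hv
  obtain ⟨x, y, h⟩ := transGen_exists_step hv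
  exact h.1 (Set.mem_univ _)

lemma fvsSet_nonempty {V : Type*} [Fintype V] (A : V → V → Prop) :
    {n | ∃ F : Set V, DirFVS A F ∧ F.ncard = n}.Nonempty :=
  ⟨_, Set.univ, dirFVS_univ A, rfl⟩

lemma dirFvsNum_le {V : Type*} [Fintype V] (A : V → V → Prop) {F : Set V}
    (h : DirFVS A F) : dirFvsNum A ≤ F.ncard :=
  Nat.sInf_le ⟨F, h, rfl⟩

lemma exists_isMinFVS {V : Type*} [Fintype V] (A : V → V → Prop) :
    ∃ F : Set V, IsMinFVS A F := by
  obtain ⟨F, hF, hc⟩ := Nat.sInf_mem (fvsSet_nonempty A)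
  exact ⟨F, hF, hc⟩

lemma dirFVS_pullback {W₁ W₂ : Type*} {A₁ : W₁ → W₁ → Prop} {A₂ : W₂ → W₂ → Prop}
    (e : W₁ → W₂) (harc : ∀ x y, A₁ x y → A₂ (e x) (e y)) {F : Set W₂}
    (hF : DirFVS A₂ F) : DirFVS A₁ (e ⁻¹' F) := by
  intro v hv
  exact hF (e v) (hv.lift e (fun a b h => ⟨h.1, h.2.1, harc a b h.2.2⟩))

lemma ncard_preimage_le {W₁ W₂ : Type*} [Fintype W₂] {e : W₁ → W₂}
    (he : Function.Injective e) (F : Set W₂) : (e ⁻¹' F).ncard ≤ F.ncard := by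
  rw [← Set.ncard_image_of_injective _ he, Set.image_preimage_eq_inter_range]
  exact Set.ncard_le_ncard Set.inter_subset_left (Set.toFinite _)

lemma ncard_preimage_eq {W₁ W₂ : Type*} {e : W₁ → W₂}
    (he : Function.Injective e) (F : Set W₂) :
    (e ⁻¹' F).ncard = (F ∩ Set.range e).ncard := by
  rw [← Set.ncard_image_of_injective _ he, Set.image_preimage_eq_inter_range]

lemma dirFvsNum_le_of_embed {W₁ W₂ : Type*} [Fintype W₁] [Fintype W₂]
    {A₁ : W₁ → W₁ → Prop} {A₂ : W₂ → W₂ → Prop}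
    (e : W₁ → W₂) (he : Function.Injective e)
    (harc : ∀ x y, A₁ x y → A₂ (e x) (e y)) :
    dirFvsNum A₁ ≤ dirFvsNum A₂ := by
  obtain ⟨F, hF, hc⟩ := exists_isMinFVS A₂
  calc dirFvsNum A₁ ≤ (e ⁻¹' F).ncard := dirFvsNum_le _ (dirFVS_pullback e harc hF)
    _ ≤ F.ncard := ncard_preimage_le he F
    _ = dirFvsNum A₂ := hc

lemma dirFvsNum_equiv {W₁ W₂ : Type*} [Fintype W₁] [Fintype W₂]
    {A₁ : W₁ → W₁ → Prop} {A₂ : W₂ → W₂ → Prop}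
    (e : W₁ ≃ W₂) (h : ∀ x y, A₁ x y ↔ A₂ (e x) (e y)) :
    dirFvsNum A₁ = dirFvsNum A₂ := by
  refine le_antisymm (dirFvsNum_le_of_embed e e.injective (fun x y hxy => (h x y).mp hxy)) ?_
  refine dirFvsNum_le_of_embed e.symm e.symm.injective (fun x y hxy => ?_)
  rw [h]; simpa using hxy

lemma exists_rank {W : Type*} [Fintype W] (S : W → W → Prop)
    (hac : ∀ v, ¬ Relation.TransGen S v v) :
    ∃ h : W → ℕ, ∀ x y, S x y → h x < h y := by
  refine ⟨fun x => {z | Relation.TransGen S z x}.ncard, fun x y hxy => ?_⟩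
  refine Set.ncard_lt_ncard ?_ (Set.toFinite _)
  rw [Set.ssubset_def]
  refine ⟨fun z hz => Relation.TransGen.tail hz hxy, fun hsub => ?_⟩
  exact hac x (hsub (Relation.TransGen.single hxy))

lemma acyclic_of_rank {W : Type*} {S : W → W → Prop} (H : W → ℕ)
    (hm : ∀ x y, S x y → H x < H y) : ∀ v, ¬ Relation.TransGen S v v := by
  have key : ∀ a b : W, Relation.TransGen S a b → H a < H b := by
    intro a b h
    induction h with
    | single h => exact hm _ _ h
    | tail _ h ih => exact ih.trans (hm _ _ h)
  intro v hv
  exact absurd (key v v hv) (lt_irrefl _)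

lemma degenerate_equiv {W₁ W₂ : Type*} {k : ℕ} (e : W₁ ≃ W₂)
    {G₁ : SimpleGraph W₁} {G₂ : SimpleGraph W₂}
    (h : ∀ x y, G₁.Adj x y ↔ G₂.Adj (e x) (e y)) (hd : Degenerate G₂ k) :
    Degenerate G₁ k := by
  intro s hs
  obtain ⟨v, hv, hb⟩ := hd (e '' s) (hs.image e)
  obtain ⟨w, hw, rfl⟩ := hv
  refine ⟨w, hw, ?_⟩
  have himg : e '' (s ∩ G₁.neighborSet w) = (e '' s) ∩ G₂.neighborSet (e w) := by
    ext x
    obtain ⟨u, rfl⟩ := e.surjective x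
    simp only [Set.mem_inter_iff, SimpleGraph.mem_neighborSet,
      e.injective.mem_set_image, h]
  calc (s ∩ G₁.neighborSet w).ncard
      = (e '' (s ∩ G₁.neighborSet w)).ncard := (Set.ncard_image_of_injective _ e.injective).symm
    _ ≤ k := by rw [himg]; exact hb

lemma ncard_prod_univ {α β : Type*} [Fintype α] [Fintype β] (s : Set β) :
    ((Set.univ : Set α) ×ˢ s).ncard = Fintype.card α * s.ncard := by
  rw [← Nat.card_coe_set_eq, Nat.card_congr (Equiv.Set.prod _ _), Nat.card_prod,
    Nat.card_coe_set_eq, Nat.card_coe_set_eq, Set.ncard_univ, Nat.card_eq_fintype_card]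

lemma ncard_prod {α β : Type*} [Fintype α] [Fintype β] (s : Set α) (t : Set β) :
    (s ×ˢ t).ncard = s.ncard * t.ncard := by
  rw [← Nat.card_coe_set_eq, Nat.card_congr (Equiv.Set.prod _ _), Nat.card_prod,
    Nat.card_coe_set_eq, Nat.card_coe_set_eq]

lemma ncard_sum_images {α β : Type*} [Fintype α] [Fintype β] (s : Set α) (t : Set β) :
    (Sum.inl '' s ∪ Sum.inr '' t : Set (α ⊕ β)).ncard = s.ncard + t.ncard := by
  rw [Set.ncard_union_eq ?_ (Set.toFinite _) (Set.toFinite _),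
    Set.ncard_image_of_injective _ Sum.inl_injective,
    Set.ncard_image_of_injective _ Sum.inr_injective]
  rw [Set.disjoint_left]
  rintro x ⟨a, _, rfl⟩ ⟨b, _, hb⟩
  exact Sum.inl_ne_inr hb.symm

lemma bad_lb {V : Type*} [Fintype V] {A : V → V → Prop} {R : Set V}
    (hRbad : BadSet A R) {G : Set V} (hG : DirFVS A G) (hR : R ⊆ G) :
    dirFvsNum A + 1 ≤ G.ncard := by
  have h1 : dirFvsNum A ≤ G.ncard := dirFvsNum_le A hG
  rcases eq_or_lt_of_le h1 with h | h
  · exact absurd hR (hRbad G ⟨hG, h.symm⟩)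
  · omega

end Stmt16

section Concrete
set_option linter.unusedSectionVars false
set_option linter.unreachableTactic false
set_option linter.unusedTactic false

namespace Stmt16

variable {V : Type*} [Fintype V] [DecidableEq V]

/-- vertices distinct from `r'` -/
abbrev Vp (r' : V) := {v : V // v ≠ r'}

/-- vertex set of `D_i` : original `V` plus `i` copies of `V \ {r'}` -/
abbrev XT (r' : V) (i : ℕ) := V ⊕ (Fin i × Vp r')

def lev {r' : V} {i : ℕ} : XT r' i → ℕ
  | Sum.inl _ => 0
  | Sum.inr p => (p.1 : ℕ) + 1

def und {r' : V} {i : ℕ} : XT r' i → V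
  | Sum.inl v => v
  | Sum.inr p => p.2.1

lemma lev_le {r' : V} {i : ℕ} (x : XT r' i) : lev x ≤ i := by
  cases x with
  | inl v => exact Nat.zero_le _
  | inr p => exact p.1.2

def arcC (A : V → V → Prop) (R : Set V) (r' : V) (i : ℕ) : XT r' i → XT r' i → Prop
  | Sum.inl u, Sum.inl v => A u v
  | Sum.inl u, Sum.inr q => (q.1 : ℕ) = 0 ∧ u ∈ R ∧ A r' q.2.1
  | Sum.inr p, Sum.inl v => (p.1 : ℕ) = 0 ∧ v ∈ R ∧ A p.2.1 r'
  | Sum.inr p, Sum.inr q =>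
      ((p.1 : ℕ) = (q.1 : ℕ) ∧ A p.2.1 q.2.1) ∨
      ((q.1 : ℕ) = (p.1 : ℕ) + 1 ∧ p.2.1 ∈ R ∧ A r' q.2.1) ∨
      ((p.1 : ℕ) = (q.1 : ℕ) + 1 ∧ q.2.1 ∈ R ∧ A p.2.1 r')

variable {A : V → V → Prop} {R : Set V} {r' : V}

lemma arcC_antisymm (hA : ∀ u v, A u v → ¬ A v u) (i : ℕ) :
    ∀ x y, arcC A R r' i x y → ¬ arcC A R r' i y x := by
  intro x y hxy hyx
  cases x with
  | inl u =>
    cases y with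
    | inl v => exact hA _ _ hxy hyx
    | inr q =>
      simp only [arcC] at hxy hyx
      exact hA _ _ hxy.2.2 hyx.2.2
  | inr p =>
    cases y with
    | inl v =>
      simp only [arcC] at hxy hyx
      exact hA _ _ hxy.2.2 hyx.2.2
    | inr q =>
      simp only [arcC] at hxy hyx
      rcases hxy with ⟨hj, h1⟩ | ⟨hj, _, h1⟩ | ⟨hj, _, h1⟩ <;>
        rcases hyx with ⟨hj', h2⟩ | ⟨hj', _, h2⟩ | ⟨hj', _, h2⟩ <;>
        first
          | omega
          | exact hA _ _ h1 h2
          | exact hA _ _ h2 h1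

def emb (r' : V) (i : ℕ) : XT r' i → XT r' (i + 1)
  | Sum.inl v => Sum.inl v
  | Sum.inr p => Sum.inr (p.1.castSucc, p.2)

lemma emb_inj {i : ℕ} : Function.Injective (emb r' i) := by
  intro x y h
  cases x with
  | inl u => cases y with
    | inl v => simpa [emb] using h
    | inr q => simp [emb] at h
  | inr p => cases y with
    | inl v => simp [emb] at h
    | inr q =>
      simp only [emb, Sum.inr.injEq, Prod.mk.injEq] at h
      obtain ⟨h1, h2⟩ := h
      exact congrArg Sum.inr (Prod.ext (Fin.castSucc_injective _ h1) h2)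

lemma lev_emb {i : ℕ} (x : XT r' i) : lev (emb r' i x) = lev x := by
  cases x with
  | inl v => rfl
  | inr p => simp [emb, lev]

lemma arc_emb {i : ℕ} (x y : XT r' i) (h : arcC A R r' i x y) :
    arcC A R r' (i + 1) (emb r' i x) (emb r' i y) := by
  cases x with
  | inl u => cases y with
    | inl v => exact h
    | inr q => simpa [arcC, emb] using h
  | inr p => cases y with
    | inl v => simpa [arcC, emb] using h
    | inr q => simpa [arcC, emb] using h

lemma range_emb {i : ℕ} : Set.range (emb r' i) = {x : XT r' (i+1) | lev x ≤ i} := by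
  ext x
  constructor
  · rintro ⟨y, rfl⟩
    simp only [Set.mem_setOf_eq, lev_emb]
    exact lev_le y
  · intro hx
    cases x with
    | inl v => exact ⟨Sum.inl v, rfl⟩
    | inr p =>
      have hlt : (p.1 : ℕ) < i := by
        simpa [lev] using hx
      have hne : p.1 ≠ Fin.last i := by
        intro hc
        rw [hc] at hlt
        simp [Fin.val_last] at hlt
      obtain ⟨j, hj⟩ := Fin.exists_castSucc_eq.mpr hne
      refine ⟨Sum.inr (j, p.2), ?_⟩
      simp [emb, hj]

lemma ncard_split {i : ℕ} (F : Set (XT r' (i+1))) :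
    F.ncard = (F ∩ {x | lev x ≤ i}).ncard + (F ∩ {x | lev x = i + 1}).ncard := by
  rw [← Set.ncard_union_eq ?_ (Set.toFinite _) (Set.toFinite _)]
  · congr 1
    ext x
    have := lev_le x
    constructor
    · intro hx
      by_cases h : lev x ≤ i
      · exact Or.inl ⟨hx, h⟩
      · exact Or.inr ⟨hx, show lev x = i + 1 by omega⟩
    · rintro (⟨hx, _⟩ | ⟨hx, _⟩) <;> exact hx
  · rw [Set.disjoint_left]
    rintro x ⟨_, hx1⟩ ⟨_, hx2⟩
    have h1 : lev x ≤ i := hx1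
    have h2 : lev x = i + 1 := hx2
    omega

/-- the glue vertex playing role of an `R`-vertex at the top level of `XT r' i` -/
def gl (r' : V) : (i : ℕ) → Vp r' → XT r' i
  | 0, w => Sum.inl w.1
  | (_ + 1), w => Sum.inr (Fin.last _, w)

lemma gl_inj {i : ℕ} : Function.Injective (gl r' i) := by
  intro x y h
  cases i with
  | zero => exact Subtype.ext (by simpa [gl] using h)
  | succ n => simpa [gl] using h

lemma lev_gl {i : ℕ} (w : Vp r') : lev (gl r' i w) ≤ i := by
  cases i with
  | zero => exact Nat.le_refl _
  | succ n => simp [gl, lev]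

/-- the copy of `R` at the top level -/
def topR (R : Set V) (r' : V) (i : ℕ) : Set (XT r' i) :=
  gl r' i '' {w : Vp r' | w.1 ∈ R}

lemma glue_up {i : ℕ} {w : Vp r'} (hw : w.1 ∈ R) (u : Vp r') (h : A r' u.1) :
    arcC A R r' (i+1) (emb r' i (gl r' i w)) (Sum.inr (Fin.last i, u)) := by
  cases i with
  | zero => exact ⟨by simp, hw, h⟩
  | succ n => exact Or.inr (Or.inl ⟨by simp [emb, gl], hw, h⟩)

lemma glue_down {i : ℕ} {w : Vp r'} (hw : w.1 ∈ R) (u : Vp r') (h : A u.1 r') :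
    arcC A R r' (i+1) (Sum.inr (Fin.last i, u)) (emb r' i (gl r' i w)) := by
  cases i with
  | zero => exact ⟨by simp, hw, h⟩
  | succ n => exact Or.inr (Or.inr ⟨by simp [emb, gl], hw, h⟩)

lemma arc_top {i : ℕ} {u v : Vp r'} (h : A u.1 v.1) :
    arcC A R r' (i+1) (Sum.inr (Fin.last i, u)) (Sum.inr (Fin.last i, v)) :=
  Or.inl ⟨rfl, h⟩

end Stmt16

end Concrete

section Lower
set_option linter.unusedSectionVars false

namespace Stmt16

variable {V : Type*} [Fintype V] [DecidableEq V]
  {A : V → V → Prop} {R : Set V} {r' : V}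

lemma lower_bound (hA : ∀ u v, A u v → ¬ A v u) (hRbad : BadSet A R) (hr' : r' ∉ R) :
    ∀ i : ℕ, ∀ F : Set (XT r' i), DirFVS (arcC A R r' i) F →
      ((i + 1) * dirFvsNum A ≤ F.ncard ∧
       (topR R r' i ⊆ F → (i + 1) * dirFvsNum A + 1 ≤ F.ncard)) := by
  intro i
  induction i with
  | zero =>
    intro F hF
    have harc : ∀ x y : V, A x y → arcC A R r' 0 (Sum.inl x) (Sum.inl y) := fun x y h => h
    have hG : DirFVS A (Sum.inl ⁻¹' F) := dirFVS_pullback _ harc hF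
    have hle : (Sum.inl ⁻¹' F : Set V).ncard ≤ F.ncard := ncard_preimage_le Sum.inl_injective F
    constructor
    · have := dirFvsNum_le A hG
      simpa using le_trans this hle
    · intro hsub
      have hRG : R ⊆ Sum.inl ⁻¹' F := by
        intro s hs
        have hsne : s ≠ r' := fun h => hr' (h ▸ hs)
        exact hsub ⟨⟨s, hsne⟩, hs, rfl⟩
      have := bad_lb hRbad hG hRG
      simpa using le_trans this hle
  | succ n ih =>
    intro F hF
    set f := dirFvsNum A with hf
    have hF0 : DirFVS (arcC A R r' n) (emb r' n ⁻¹' F) :=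
      dirFVS_pullback _ (fun x y h => arc_emb x y h) hF
    have hsplit := ncard_split F
    have hF0card : (emb r' n ⁻¹' F).ncard = (F ∩ {x | lev x ≤ n}).ncard := by
      rw [ncard_preimage_eq emb_inj, range_emb]
    obtain ⟨P, hP⟩ : ∃ P, (n + 1) * f = P := ⟨_, rfl⟩
    have hq : (n + 1 + 1) * f = P + f := by rw [← hP]; ring
    by_cases hglue : topR R r' n ⊆ emb r' n ⁻¹' F
    · -- all glue vertices for the top copy are deleted
      have h1 := (ih _ hF0).2 hglue
      rw [hP] at h1
      set m : Vp r' → XT r' (n+1) := fun w => Sum.inr (Fin.last n, w) with hm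
      have hminj : Function.Injective m := by
        intro a b h
        simpa [hm] using h
      set Inner : Set (Vp r') := {w | m w ∈ F} with hInner
      set G : Set V := insert r' (Subtype.val '' Inner) with hG
      set e2 : V → XT r' (n+1) :=
        fun v => if h : v = r' then Sum.inl v else m ⟨v, h⟩ with he2
      have he2eq : ∀ (v : V) (h : v ≠ r'), e2 v = m ⟨v, h⟩ := by
        intro v h
        simp only [he2, dif_neg h]
      have hGfvs : DirFVS A G := by
        intro v hv
        refine hF (e2 v) (Relation.TransGen.lift e2 ?_ _ _ hv)
        rintro a b ⟨ha, hb, hab⟩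
        have ha' : a ≠ r' := fun h => ha (h ▸ Set.mem_insert _ _)
        have hb' : b ≠ r' := fun h => hb (h ▸ Set.mem_insert _ _)
        rw [Function.onFun, he2eq a ha', he2eq b hb']
        refine ⟨?_, ?_, arc_top hab⟩
        · intro hmem
          exact ha (Set.mem_insert_of_mem _ ⟨⟨a, ha'⟩, hmem, rfl⟩)
        · intro hmem
          exact hb (Set.mem_insert_of_mem _ ⟨⟨b, hb'⟩, hmem, rfl⟩)
      have hr'G : r' ∉ Subtype.val '' Inner := by
        rintro ⟨w, _, hw⟩
        exact w.2 hw
      have hGcard : G.ncard = Inner.ncard + 1 := by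
        rw [hG, Set.ncard_insert_of_notMem hr'G (Set.toFinite _),
          Set.ncard_image_of_injective _ Subtype.val_injective]
      have hImg : m '' Inner = F ∩ {x | lev x = n + 1} := by
        ext x
        constructor
        · rintro ⟨w, hw, rfl⟩
          exact ⟨hw, by simp [hm, lev]⟩
        · rintro ⟨hxF, hxl⟩
          cases x with
          | inl v => simp [lev] at hxl
          | inr p =>
            have hpl : (p.1 : ℕ) = n := by simpa [lev] using hxl
            have hp1 : p.1 = Fin.last n := Fin.ext (by simp [hpl])
            refine ⟨p.2, ?_, ?_⟩
            · show m p.2 ∈ F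
              rw [hm]
              simpa [← hp1] using hxF
            · rw [hm]
              simp only
              rw [← hp1]
      have hInnercard : Inner.ncard = (F ∩ {x | lev x = n + 1}).ncard := by
        rw [← hImg, Set.ncard_image_of_injective _ hminj]
      have hfG : f ≤ G.ncard := dirFvsNum_le A hGfvs
      constructor
      · rw [hq]
        omega
      · intro htopR
        have hRG : R ⊆ G := by
          intro s hs
          have hsne : s ≠ r' := fun h => hr' (h ▸ hs)
          have : gl r' (n+1) ⟨s, hsne⟩ ∈ F := htopR ⟨⟨s, hsne⟩, hs, rfl⟩
          exact Set.mem_insert_of_mem _ ⟨⟨s, hsne⟩, this, rfl⟩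
        have := bad_lb hRbad hGfvs hRG
        rw [hq]
        omega
    · -- some glue vertex survives
      have h1 := (ih _ hF0).1
      rw [hP] at h1
      obtain ⟨x0, hx0R, hx0F⟩ := Set.not_subset.mp hglue
      obtain ⟨w, hwR, rfl⟩ := hx0R
      set g : XT r' (n+1) := emb r' n (gl r' n w) with hg
      have hgF : g ∉ F := hx0F
      have hglev : lev g ≤ n := by rw [hg, lev_emb]; exact lev_gl w
      set e : V → XT r' (n+1) :=
        fun v => if h : v = r' then g else Sum.inr (Fin.last n, ⟨v, h⟩) with he
      have heg : e r' = g := by simp only [he, dif_pos rfl]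
      have hev : ∀ (v : V) (h : v ≠ r'), e v = Sum.inr (Fin.last n, ⟨v, h⟩) := by
        intro v h
        simp only [he, dif_neg h]
      have harc : ∀ x y, A x y → arcC A R r' (n+1) (e x) (e y) := by
        intro x y hxy
        by_cases hx : x = r' <;> by_cases hy : y = r'
        · subst hx; subst hy; exact absurd hxy (hA _ _ hxy)
        · rw [hx] at hxy
          rw [hx, heg, hev y hy]
          exact glue_up hwR ⟨y, hy⟩ hxy
        · rw [hy] at hxy
          rw [hy, heg, hev x hx]
          exact glue_down hwR ⟨x, hx⟩ hxy
        · rw [hev x hx, hev y hy]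
          exact arc_top hxy
      have he_inj : Function.Injective e := by
        intro a b hab
        by_cases ha : a = r' <;> by_cases hb : b = r'
        · rw [ha, hb]
        · rw [ha, heg, hev b hb] at hab
          have := congrArg lev hab
          rw [show lev (Sum.inr (Fin.last n, (⟨b, hb⟩ : Vp r')) : XT r' (n+1)) = n + 1 from by
            simp [lev]] at this
          omega
        · rw [hb, heg, hev a ha] at hab
          have := congrArg lev hab
          rw [show lev (Sum.inr (Fin.last n, (⟨a, ha⟩ : Vp r')) : XT r' (n+1)) = n + 1 from by
            simp [lev]] at this
          omega
        · rw [hev a ha, hev b hb] at hab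
          simpa using hab
      have hGfvs : DirFVS A (e ⁻¹' F) := dirFVS_pullback e harc hF
      have hcount : (e ⁻¹' F).ncard ≤ (F ∩ {x | lev x = n + 1}).ncard := by
        rw [ncard_preimage_eq he_inj]
        refine Set.ncard_le_ncard ?_ (Set.toFinite _)
        rintro x ⟨hxF, v, hvx⟩
        by_cases hv : v = r'
        · rw [hv, heg] at hvx
          rw [← hvx] at hxF
          exact absurd hxF hgF
        · rw [hev v hv] at hvx
          rw [← hvx]
          rw [← hvx] at hxF
          exact ⟨hxF, by simp [lev]⟩
      have hfG : f ≤ (e ⁻¹' F).ncard := dirFvsNum_le A hGfvs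
      constructor
      · rw [hq]
        omega
      · intro htopR
        have hRG : R ⊆ e ⁻¹' F := by
          intro s hs
          have hsne : s ≠ r' := fun h => hr' (h ▸ hs)
          have hmem : gl r' (n+1) ⟨s, hsne⟩ ∈ F := htopR ⟨⟨s, hsne⟩, hs, rfl⟩
          show e s ∈ F
          rw [hev s hsne]
          exact hmem
        have := bad_lb hRbad hGfvs hRG
        rw [hq]
        omega

end Stmt16

end Lower

section Upper
set_option linter.unusedSectionVars false

namespace Stmt16

variable {V : Type*} [Fintype V] [DecidableEq V]
  {A : V → V → Prop} {R : Set V} {r' : V}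

lemma upper_bound (hA : ∀ u v, A u v → ¬ A v u) (hRne : R.Nonempty) (hr' : r' ∉ R)
    (hmin : MinimalBadSet A R) (i : ℕ) :
    ∃ Fi : Set (XT r' i), DirFVS (arcC A R r' i) Fi ∧
      Fi.ncard = (i + 1) * dirFvsNum A := by
  classical
  set f := dirFvsNum A with hf
  obtain ⟨r, hrR⟩ := hRne
  obtain ⟨F, hFmin, hRF⟩ := hmin.2 r hrR
  have hFfvs : DirFVS A F := hFmin.1
  have hFcard : F.ncard = f := hFmin.2
  have hrF : r ∉ F := by
    have : r ∈ R \ F := by rw [hRF]; rfl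
    exact this.2
  have hrne : r ≠ r' := fun h => hr' (h ▸ hrR)
  have hRr : ∀ s, s ∈ R → s ∉ F → s = r := by
    intro s hs hsF
    have : s ∈ R \ F := ⟨hs, hsF⟩
    rwa [hRF] at this
  obtain ⟨h, hh⟩ := exists_rank (fun x y => x ∉ F ∧ y ∉ F ∧ A x y) hFfvs
  set C : ℕ := (Finset.univ.sup h) + 1 with hCdef
  have hC : ∀ v, h v < C := fun v =>
    Nat.lt_succ_of_le (Finset.le_sup (Finset.mem_univ v))
  have hCpos : 0 < C := Nat.succ_pos _
  by_cases hr'F : r' ∈ F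
  · -- r' is in the minimum FVS
    cases i with
    | zero =>
      refine ⟨Sum.inl '' F, ?_, ?_⟩
      · intro v hv
        refine hFfvs (und v) (Relation.TransGen.lift und ?_ _ _ hv)
        rintro a b ⟨ha, hb, hab⟩
        cases a with
        | inr p => exact p.1.elim0
        | inl ua =>
          cases b with
          | inr q => exact q.1.elim0
          | inl ub =>
            refine ⟨fun hm => ha ⟨ua, hm, rfl⟩, fun hm => hb ⟨ub, hm, rfl⟩, hab⟩
      · rw [Set.ncard_image_of_injective _ Sum.inl_injective, hFcard]
        ring
    | succ n =>
      set rw' : Vp r' := ⟨r, hrne⟩ with hrw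
      set σF : Set (Vp r') := {w | w.1 ∈ F} with hσF
      set T1 : Set (Fin (n+1) × Vp r') := (Set.univ : Set (Fin (n+1))) ×ˢ σF with hT1
      set T2 : Set (Fin (n+1) × Vp r') :=
        {j : Fin (n+1) | (j : ℕ) < n} ×ˢ ({rw'} : Set (Vp r')) with hT2
      set Fi : Set (XT r' (n+1)) := Sum.inl '' (insert r F) ∪ Sum.inr '' (T1 ∪ T2) with hFi
      have hmem1 : ∀ v : V, (Sum.inl v : XT r' (n+1)) ∉ Fi → v ∉ F ∧ v ≠ r := by
        intro v hv
        constructor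
        · exact fun hm => hv (Or.inl ⟨v, Set.mem_insert_of_mem _ hm, rfl⟩)
        · exact fun hm => hv (Or.inl ⟨v, hm ▸ Set.mem_insert _ _, rfl⟩)
      have hmem2 : ∀ (j : Fin (n+1)) (w : Vp r'), (Sum.inr (j, w) : XT r' (n+1)) ∉ Fi →
          w.1 ∉ F ∧ (w.1 = r → ¬ ((j : ℕ) < n)) := by
        intro j w hv
        constructor
        · exact fun hm => hv (Or.inr ⟨(j, w), Or.inl ⟨Set.mem_univ _, hm⟩, rfl⟩)
        · intro hwr hjn
          refine hv (Or.inr ⟨(j, w), Or.inr ⟨hjn, ?_⟩, rfl⟩)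
          show w ∈ ({rw'} : Set (Vp r'))
          rw [hrw]
          exact Subtype.ext hwr
      refine ⟨Fi, ?_, ?_⟩
      · -- FVS via rank: no cross arcs survive
        refine fun v hv => acyclic_of_rank (fun x => lev x * C + h (und x)) ?_ v hv
        rintro x y ⟨hx, hy, hxy⟩
        cases x with
        | inl ux =>
          cases y with
          | inl uy =>
            have h1 := (hmem1 _ hx).1
            have h2 := (hmem1 _ hy).1
            have := hh _ _ ⟨h1, h2, hxy⟩
            simp only [lev, und]
            omega
          | inr q =>
            obtain ⟨_, hxR, _⟩ := hxy
            have h1 := hmem1 _ hx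
            exact absurd (hRr _ hxR h1.1) h1.2
        | inr p =>
          cases y with
          | inl uy =>
            obtain ⟨_, hyR, _⟩ := hxy
            have h2 := hmem1 _ hy
            exact absurd (hRr _ hyR h2.1) h2.2
          | inr q =>
            rcases hxy with ⟨hj, hab⟩ | ⟨hj, hpR, _⟩ | ⟨hj, hqR, _⟩
            · have h1 := (hmem2 _ _ hx).1
              have h2 := (hmem2 _ _ hy).1
              have := hh _ _ ⟨h1, h2, hab⟩
              simp only [lev, und]
              rw [← hj]
              omega
            · have h1 := hmem2 _ _ hx
              have hpr : p.2.1 = r := hRr _ hpR h1.1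
              have : (q.1 : ℕ) ≤ n := Nat.lt_succ_iff.mp q.1.2
              exact absurd (by omega : (p.1 : ℕ) < n) (h1.2 hpr)
            · have h2 := hmem2 _ _ hy
              have hqr : q.2.1 = r := hRr _ hqR h2.1
              have : (p.1 : ℕ) ≤ n := Nat.lt_succ_iff.mp p.1.2
              exact absurd (by omega : (q.1 : ℕ) < n) (h2.2 hqr)
      · -- cardinality
        have hσcard : σF.ncard + 1 = f := by
          have hval : Subtype.val '' σF = F \ {r'} := by
            ext v
            constructor
            · rintro ⟨w, hw, rfl⟩
              exact ⟨hw, w.2⟩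
            · rintro ⟨hv, hvne⟩
              exact ⟨⟨v, hvne⟩, hv, rfl⟩
          have h1 : σF.ncard = (F \ {r'}).ncard := by
            rw [← hval, Set.ncard_image_of_injective _ Subtype.val_injective]
          have h2 : (F \ {r'}).ncard = F.ncard - 1 :=
            Set.ncard_diff_singleton_of_mem hr'F
          have h3 : 0 < F.ncard := (Set.ncard_pos (Set.toFinite _)).mpr ⟨r', hr'F⟩
          rw [h1, h2, ← hFcard]
          omega
        have hT1card : T1.ncard = (n + 1) * σF.ncard := by
          rw [hT1, ncard_prod, Set.ncard_univ, Nat.card_eq_fintype_card, Fintype.card_fin]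
        have hT2card : T2.ncard = n := by
          rw [hT2, ncard_prod, Set.ncard_singleton, mul_one]
          have : {j : Fin (n+1) | (j : ℕ) < n} = Fin.castSucc '' (Set.univ : Set (Fin n)) := by
            ext j
            constructor
            · intro hj
              have hne : j ≠ Fin.last n := by
                intro hc
                rw [hc] at hj
                simp at hj
              obtain ⟨j', hj'⟩ := Fin.exists_castSucc_eq.mpr hne
              exact ⟨j', Set.mem_univ _, hj'⟩
            · rintro ⟨j', _, rfl⟩
              simpa using j'.2
          rw [this, Set.ncard_image_of_injective _ (Fin.castSucc_injective _),
            Set.ncard_univ, Nat.card_eq_fintype_card, Fintype.card_fin]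
        have hT12 : (T1 ∪ T2).ncard = (n + 1) * σF.ncard + n := by
          rw [Set.ncard_union_eq ?_ (Set.toFinite _) (Set.toFinite _), hT1card, hT2card]
          rw [Set.disjoint_left]
          rintro ⟨j, w⟩ ⟨_, hw1⟩ ⟨_, hw2⟩
          have hw1' : w.1 ∈ F := hw1
          have hw2' : w = rw' := hw2
          rw [hw2', hrw] at hw1'
          exact hrF hw1'
        have hins : (insert r F).ncard = f + 1 := by
          rw [Set.ncard_insert_of_notMem hrF (Set.toFinite _), hFcard]
        rw [hFi, ncard_sum_images, hins, hT12]
        set a := σF.ncard with ha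
        have : f = a + 1 := by omega
        rw [this]
        ring
  · -- r' not in the minimum FVS : use digit-rank
    set σF : Set (Vp r') := {w | w.1 ∈ F} with hσF
    set Fi : Set (XT r' i) :=
      Sum.inl '' F ∪ Sum.inr '' ((Set.univ : Set (Fin i)) ×ˢ σF) with hFi
    have hmem1 : ∀ v : V, (Sum.inl v : XT r' i) ∉ Fi → v ∉ F :=
      fun v hv hm => hv (Or.inl ⟨v, hm, rfl⟩)
    have hmem2 : ∀ (j : Fin i) (w : Vp r'), (Sum.inr (j, w) : XT r' i) ∉ Fi → w.1 ∉ F :=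
      fun j w hv hm => hv (Or.inr ⟨(j, w), ⟨Set.mem_univ _, hm⟩, rfl⟩)
    set E : ℕ → ℕ := fun ℓ => C ^ (i + 2 - ℓ) with hEdef
    have hEpos : ∀ ℓ, 0 < E ℓ := fun ℓ => Nat.pow_pos hCpos
    have hE : ∀ ℓ, ℓ ≤ i + 1 → E ℓ = C * E (ℓ + 1) := by
      intro ℓ hℓ
      rw [hEdef]
      simp only
      rw [show i + 2 - ℓ = (i + 2 - (ℓ + 1)) + 1 from by omega, pow_succ, mul_comm]
    set p : ℕ → ℕ := fun ℓ => ∑ m ∈ Finset.range ℓ, h r * E m with hpdef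
    have hp : ∀ ℓ, p (ℓ + 1) = p ℓ + h r * E ℓ := by
      intro ℓ
      rw [hpdef]
      simp only
      rw [Finset.sum_range_succ]
    set H : XT r' i → ℕ := fun x =>
      p (lev x) + h (und x) * E (lev x) +
        (if und x = r then h r' * E (lev x + 1) else 0) with hHdef
    have hext : ∀ x : XT r' i,
        (if und x = r then h r' * E (lev x + 1) else 0) < E (lev x) := by
      intro x
      have hlev : lev x ≤ i := lev_le x
      split
      · rw [hE (lev x) (by omega)]
        exact (Nat.mul_lt_mul_right (hEpos _)).mpr (hC r')
      · exact hEpos _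
    have harith : ∀ (a b ea eb Eℓ : ℕ), a < b → ea < Eℓ →
        a * Eℓ + ea < b * Eℓ + eb := by
      intro a b ea eb Eℓ hab hea
      calc a * Eℓ + ea < a * Eℓ + Eℓ := by omega
        _ = (a + 1) * Eℓ := by ring
        _ ≤ b * Eℓ := Nat.mul_le_mul_right _ hab
        _ ≤ b * Eℓ + eb := Nat.le_add_right _ _
    have hsame : ∀ x y : XT r' i, lev x = lev y → h (und x) < h (und y) → H x < H y := by
      intro x y hlev hlt
      rw [hHdef]
      simp only
      rw [← hlev]
      have := harith (h (und x)) (h (und y)) _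
        (if und y = r then h r' * E (lev x + 1) else 0) (E (lev x)) hlt (hext x)
      omega
    have hup : ∀ x y : XT r' i, und x = r → lev y = lev x + 1 →
        h r' < h (und y) → H x < H y := by
      intro x y hxr hlev hlt
      rw [hHdef]
      simp only
      rw [if_pos hxr, hxr, hlev, hp (lev x)]
      have := (Nat.mul_lt_mul_right (hEpos (lev x + 1))).mpr hlt
      omega
    have hdown : ∀ x y : XT r' i, und y = r → lev x = lev y + 1 →
        h (und x) < h r' → H x < H y := by
      intro x y hyr hlev hlt
      rw [hHdef]
      simp only
      rw [if_pos hyr, hyr, hlev, hp (lev y)]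
      have hex : (if und x = r then h r' * E (lev x + 1) else 0) < E (lev x) := hext x
      have := harith (h (und x)) (h r')
        (if und x = r then h r' * E (lev x + 1) else 0) 0 (E (lev x)) hlt hex
      rw [hlev] at this
      omega
    refine ⟨Fi, ?_, ?_⟩
    · refine fun v hv => acyclic_of_rank H ?_ v hv
      rintro x y ⟨hx, hy, hxy⟩
      cases x with
      | inl ux =>
        cases y with
        | inl uy =>
          exact hsame _ _ rfl (hh _ _ ⟨hmem1 _ hx, hmem1 _ hy, hxy⟩)
        | inr q =>
          obtain ⟨hq0, hxR, hq⟩ := hxy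
          have hxr : ux = r := hRr _ hxR (hmem1 _ hx)
          refine hup _ _ hxr (by simp [lev, hq0]) (hh _ _ ⟨hr'F, hmem2 _ _ hy, hq⟩)
      | inr p =>
        cases y with
        | inl uy =>
          obtain ⟨hp0, hyR, hq⟩ := hxy
          have hyr : uy = r := hRr _ hyR (hmem1 _ hy)
          refine hdown _ _ hyr (by simp [lev, hp0]) (hh _ _ ⟨hmem2 _ _ hx, hr'F, hq⟩)
        | inr q =>
          rcases hxy with ⟨hj, hab⟩ | ⟨hj, hpR, hq⟩ | ⟨hj, hqR, hq⟩
          · exact hsame _ _ (by simp [lev, hj]) (hh _ _ ⟨hmem2 _ _ hx, hmem2 _ _ hy, hab⟩)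
          · have hxr : p.2.1 = r := hRr _ hpR (hmem2 _ _ hx)
            refine hup _ _ hxr (by simp [lev]; omega) (hh _ _ ⟨hr'F, hmem2 _ _ hy, hq⟩)
          · have hyr : q.2.1 = r := hRr _ hqR (hmem2 _ _ hy)
            refine hdown _ _ hyr (by simp [lev]; omega) (hh _ _ ⟨hmem2 _ _ hx, hr'F, hq⟩)
    · have hσcard : σF.ncard = f := by
        have hval : Subtype.val '' σF = F := by
          ext v
          constructor
          · rintro ⟨w, hw, rfl⟩
            exact hw
          · intro hv
            exact ⟨⟨v, fun hc => hr'F (hc ▸ hv)⟩, hv, rfl⟩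
        rw [← hFcard, ← hval, Set.ncard_image_of_injective _ Subtype.val_injective]
      rw [hFi, ncard_sum_images, ncard_prod_univ, Fintype.card_fin, hσcard, hFcard]
      ring

end Stmt16

end Upper

section Degen
set_option linter.unusedSectionVars false

namespace Stmt16

variable {V : Type*} [Fintype V] [DecidableEq V]

lemma mul_add_lt {a b ea eb E : ℕ} (hab : a < b) (hea : ea < E) :
    a * E + ea < b * E + eb := by
  calc a * E + ea < a * E + E := by omega
    _ = (a + 1) * E := by ring
    _ ≤ b * E := Nat.mul_le_mul_right _ hab
    _ ≤ b * E + eb := Nat.le_add_right _ _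

def psi (R : Set V) (r' : V) (hR : 0 < R.ncard) (i : ℕ) :
    XT r' i → (Vp r' ⊕ Fin R.ncard)
  | Sum.inl v => if h : v = r' then Sum.inr ⟨0, hR⟩ else Sum.inl ⟨v, h⟩
  | Sum.inr p => Sum.inl p.2

variable {A : V → V → Prop} {R : Set V} {r' : V}

lemma psi_inr {hR : 0 < R.ncard} {i : ℕ} (p : Fin i × Vp r') :
    psi R r' hR i (Sum.inr p) = Sum.inl p.2 := rfl

lemma psi_inl_of_ne {hR : 0 < R.ncard} {i : ℕ} {v : V} (h : v ≠ r') :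
    psi R r' hR i (Sum.inl v) = Sum.inl ⟨v, h⟩ := by simp [psi, h]

lemma psi_inl_self {hR : 0 < R.ncard} {i : ℕ} :
    psi R r' hR i (Sum.inl r') = Sum.inr ⟨0, hR⟩ := by simp [psi]

lemma und_lev_inj {i : ℕ} {x y : XT r' i} (h1 : lev x = lev y) (h2 : und x = und y) :
    x = y := by
  cases x with
  | inl u =>
    cases y with
    | inl v => exact congrArg Sum.inl h2
    | inr q => simp [lev] at h1
  | inr p =>
    cases y with
    | inl v => simp [lev] at h1
    | inr q =>
      have hj : p.1 = q.1 := Fin.ext (by simpa [lev] using h1)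
      have hw : p.2 = q.2 := Subtype.ext h2
      exact congrArg Sum.inr (Prod.ext hj hw)

lemma psi_inj_lev {hR : 0 < R.ncard} {i : ℕ} {x y : XT r' i} (h1 : lev x = lev y)
    (h2 : psi R r' hR i x = psi R r' hR i y) : x = y := by
  cases x with
  | inl u =>
    cases y with
    | inl v =>
      by_cases hu : u = r' <;> by_cases hv : v = r'
      · rw [hu, hv]
      · rw [hu, psi_inl_self, psi_inl_of_ne hv] at h2
        exact absurd h2 (by simp)
      · rw [hv, psi_inl_self, psi_inl_of_ne hu] at h2
        exact absurd h2 (by simp)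
      · rw [psi_inl_of_ne hu, psi_inl_of_ne hv] at h2
        simp only [Sum.inl.injEq, Subtype.mk.injEq] at h2
        exact congrArg Sum.inl h2
    | inr q => simp [lev] at h1
  | inr p =>
    cases y with
    | inl v => simp [lev] at h1
    | inr q =>
      have hj : p.1 = q.1 := Fin.ext (by simpa [lev] using h1)
      rw [psi_inr, psi_inr] at h2
      simp only [Sum.inl.injEq] at h2
      exact congrArg Sum.inr (Prod.ext hj h2)

lemma degen (hRne : R.Nonempty) (hr' : r' ∉ R) {k : ℕ}
    (helim : ∃ φ : (Vp r' ⊕ Fin (R.ncard)) ≃ Fin (Fintype.card (Vp r' ⊕ Fin (R.ncard))),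
      (∀ (s : Fin (R.ncard)) (w : Vp r'), (φ (Sum.inr s) : ℕ) < (φ (Sum.inl w) : ℕ)) ∧
      ∀ v, ({u | (SimpleGraph.fromRel (blowup A R r')).Adj v u ∧
        (φ u : ℕ) < (φ v : ℕ)}).ncard ≤ k) (i : ℕ) :
    Degenerate (SimpleGraph.fromRel (arcC A R r' i)) k := by
  classical
  obtain ⟨φ, hφ1, hφ2⟩ := helim
  have hRpos : 0 < R.ncard := (Set.ncard_pos (Set.toFinite _)).mpr hRne
  set ψ : XT r' i → (Vp r' ⊕ Fin R.ncard) := psi R r' hRpos i with hψ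
  obtain ⟨M, hM⟩ : ∃ M, Fintype.card (Vp r' ⊕ Fin (R.ncard)) = M := ⟨_, rfl⟩
  set ρ : XT r' i → ℕ := fun x => lev x * M + (φ (ψ x) : ℕ) with hρdef
  have hφM : ∀ b, (φ b : ℕ) < M := fun b => hM ▸ (φ b).2
  have hlev_of_rank : ∀ x y : XT r' i, ρ x < ρ y → lev x ≤ lev y := by
    intro x y hxy
    by_contra hc
    have := mul_add_lt (E := M) (eb := (φ (ψ x) : ℕ)) (by omega : lev y < lev x) (hφM (ψ y))
    rw [hρdef] at hxy
    simp only at hxy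
    omega
  have hsame_of_rank : ∀ x y : XT r' i, ρ x < ρ y → lev x = lev y →
      (φ (ψ x) : ℕ) < (φ (ψ y) : ℕ) := by
    intro x y hxy hlev
    rw [hρdef] at hxy
    simp only at hxy
    rw [hlev] at hxy
    omega
  have hρinj : ∀ x y : XT r' i, ρ x = ρ y → x = y := by
    intro x y hxy
    have hlev : lev x = lev y := by
      by_contra hc
      rcases Nat.lt_or_ge (lev x) (lev y) with hlt | hge
      · have := mul_add_lt (E := M) (eb := (φ (ψ y) : ℕ)) hlt (hφM (ψ x))
        rw [hρdef] at hxy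
        simp only at hxy
        omega
      · have := mul_add_lt (E := M) (eb := (φ (ψ x) : ℕ)) (by omega : lev y < lev x) (hφM (ψ y))
        rw [hρdef] at hxy
        simp only at hxy
        omega
    have hφeq : φ (ψ x) = φ (ψ y) := by
      rw [hρdef] at hxy
      simp only at hxy
      rw [hlev] at hxy
      exact Fin.ext (by omega)
    exact psi_inj_lev hlev (φ.injective hφeq)
  -- main bound on down-neighbourhoods
  have hD : ∀ v : XT r' i,
      ({u | (SimpleGraph.fromRel (arcC A R r' i)).Adj v u ∧ ρ u < ρ v}).ncard ≤ k := by
    intro v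
    cases v with
    | inl uv =>
      by_cases huv : uv = r'
      · -- the blown-up vertex at level 0 : no down neighbours
        rw [huv]
        have hempty : {u | (SimpleGraph.fromRel (arcC A R r' i)).Adj (Sum.inl r') u ∧
            ρ u < ρ (Sum.inl r')} = ∅ := by
          rw [Set.eq_empty_iff_forall_notMem]
          rintro u ⟨hadj, hρu⟩
          rw [SimpleGraph.fromRel_adj] at hadj
          obtain ⟨hne, harc⟩ := hadj
          cases u with
          | inl w =>
            have hw : w ≠ r' := fun hc => hne (congrArg Sum.inl hc.symm)
            have hlt := hsame_of_rank _ _ hρu rfl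
            have e1 : ψ (Sum.inl r') = Sum.inr ⟨0, hRpos⟩ := psi_inl_self
            have e2 : ψ (Sum.inl w) = Sum.inl ⟨w, hw⟩ := psi_inl_of_ne hw
            rw [e1, e2] at hlt
            have := hφ1 ⟨0, hRpos⟩ ⟨w, hw⟩
            omega
          | inr q =>
            rcases harc with h | h
            · exact hr' h.2.1
            · exact hr' h.2.1
        rw [hempty]
        simp
      · -- ordinary vertex at level 0
        have hψv : ψ (Sum.inl uv) = Sum.inl ⟨uv, huv⟩ := psi_inl_of_ne huv
        refine le_trans (Set.ncard_le_ncard_of_injOn ψ ?_ ?_ (Set.toFinite _))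
          (hφ2 (Sum.inl ⟨uv, huv⟩))
        · rintro u ⟨hadj, hρu⟩
          rw [SimpleGraph.fromRel_adj] at hadj
          obtain ⟨hne, harc⟩ := hadj
          have hlev0 : lev u = 0 := Nat.le_zero.mp (hlev_of_rank _ _ hρu)
          cases u with
          | inr q => simp [lev] at hlev0
          | inl w =>
            have hw : w ≠ uv := fun hc => hne (congrArg Sum.inl hc.symm)
            have hφlt := hsame_of_rank _ _ hρu rfl
            rw [hψv] at hφlt
            by_cases hwr : w = r'
            · have e2 : ψ (Sum.inl w) = Sum.inr ⟨0, hRpos⟩ := by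
                rw [hwr]
                exact psi_inl_self
              rw [e2] at hφlt
              rw [Set.mem_setOf_eq, e2]
              refine ⟨?_, hφlt⟩
              rw [SimpleGraph.fromRel_adj]
              subst hwr
              exact ⟨by simp, harc⟩
            · have e2 : ψ (Sum.inl w) = Sum.inl ⟨w, hwr⟩ := psi_inl_of_ne hwr
              rw [e2] at hφlt
              rw [Set.mem_setOf_eq, e2]
              refine ⟨?_, hφlt⟩
              rw [SimpleGraph.fromRel_adj]
              refine ⟨?_, harc⟩
              simp only [ne_eq, Sum.inl.injEq, Subtype.mk.injEq]
              exact fun hc => hw hc.symm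
        · rintro u1 ⟨-, h1⟩ u2 ⟨-, h2⟩ heq
          have hl1 : lev u1 = 0 := Nat.le_zero.mp (hlev_of_rank _ _ h1)
          have hl2 : lev u2 = 0 := Nat.le_zero.mp (hlev_of_rank _ _ h2)
          exact psi_inj_lev (by omega) heq
    | inr pv =>
      -- vertex at positive level
      have hψv : ψ (Sum.inr pv) = Sum.inl pv.2 := rfl
      set Dset := {u | (SimpleGraph.fromRel (arcC A R r' i)).Adj (Sum.inr pv) u ∧
        ρ u < ρ (Sum.inr pv)} with hDset
      set T := {u | (SimpleGraph.fromRel (blowup A R r')).Adj (Sum.inl pv.2) u ∧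
        (φ u : ℕ) < (φ (Sum.inl pv.2) : ℕ)} with hT
      set Tl := T ∩ Set.range Sum.inl with hTl
      set Tr := T ∩ Set.range Sum.inr with hTr
      have hTcover : Tl ∪ Tr = T := by
        rw [hTl, hTr, ← Set.inter_union_distrib_left]
        refine Set.inter_eq_left.mpr ?_
        intro x hx
        cases x with
        | inl a => exact Or.inl ⟨a, rfl⟩
        | inr b => exact Or.inr ⟨b, rfl⟩
      have hTsplit : Tl.ncard + Tr.ncard = T.ncard := by
        rw [← hTcover, Set.ncard_union_eq ?_ (Set.toFinite _) (Set.toFinite _)]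
        rw [Set.disjoint_left]
        rintro x ⟨-, a, rfl⟩ ⟨-, b, hb⟩
        exact Sum.inl_ne_inr hb.symm
      set Dsame := Dset ∩ {u : XT r' i | lev u = lev (Sum.inr pv : XT r' i)} with hDsame
      set Dglue := Dset ∩ {u : XT r' i | lev u ≠ lev (Sum.inr pv : XT r' i)} with hDglue
      have hDsub : Dset ⊆ Dsame ∪ Dglue := by
        intro x hx
        by_cases hc : lev x = lev (Sum.inr pv : XT r' i)
        · exact Or.inl ⟨hx, hc⟩
        · exact Or.inr ⟨hx, hc⟩
      have hcardR : Fintype.card ↥R = R.ncard := by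
        rw [Set.ncard_eq_toFinset_card', Set.toFinset_card]
      set eR : ↥R ≃ Fin R.ncard := Fintype.equivFinOfCardEq hcardR with heR
      -- characterize glue neighbours
      have hchar : ∀ u ∈ Dglue, ∃ hu : und u ∈ R,
          lev u + 1 = lev (Sum.inr pv : XT r' i) ∧ (A pv.2.1 r' ∨ A r' pv.2.1) := by
        rintro u ⟨⟨hadj, hρu⟩, hlevne⟩
        have hle := hlev_of_rank _ _ hρu
        have hlt : lev u < lev (Sum.inr pv : XT r' i) :=
          lt_of_le_of_ne hle hlevne
        rw [SimpleGraph.fromRel_adj] at hadj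
        obtain ⟨hne, harc⟩ := hadj
        cases u with
        | inl w =>
          rcases harc with ⟨hp0, hwR, hA'⟩ | ⟨hp0, hwR, hA'⟩
          · exact ⟨hwR, by simp [lev, hp0], Or.inl hA'⟩
          · exact ⟨hwR, by simp [lev, hp0], Or.inr hA'⟩
        | inr q =>
          have hql : (q.1 : ℕ) < (pv.1 : ℕ) := by
            simpa [lev] using hlt
          rcases harc with (⟨hj, _⟩ | ⟨hj, hqR, hA'⟩ | ⟨hj, hqR, hA'⟩) |
            (⟨hj, _⟩ | ⟨hj, hqR, hA'⟩ | ⟨hj, hqR, hA'⟩)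
          · exact absurd hj (by omega)
          · exact absurd hj (by omega)
          · exact ⟨hqR, by simp only [lev]; omega, Or.inl hA'⟩
          · exact absurd hj (by omega)
          · exact ⟨hqR, by simp only [lev]; omega, Or.inr hA'⟩
          · exact absurd hj (by omega)
      -- same-level neighbours inject into Tl via ψ
      have hs1 : Dsame.ncard ≤ Tl.ncard := by
        refine Set.ncard_le_ncard_of_injOn ψ ?_ ?_ (Set.toFinite _)
        · rintro u ⟨⟨hadj, hρu⟩, hlev⟩
          rw [SimpleGraph.fromRel_adj] at hadj
          obtain ⟨hne, harc⟩ := hadj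
          cases u with
          | inl w =>
            have : lev (Sum.inl w : XT r' i) = lev (Sum.inr pv : XT r' i) := hlev
            simp [lev] at this
          | inr q =>
            have hq : (q.1 : ℕ) = (pv.1 : ℕ) := by
              have : lev (Sum.inr q : XT r' i) = lev (Sum.inr pv : XT r' i) := hlev
              simpa [lev] using this
            have hAdisj : A pv.2.1 q.2.1 ∨ A q.2.1 pv.2.1 := by
              rcases harc with (⟨_, h⟩ | ⟨hj, _, _⟩ | ⟨hj, _, _⟩) |
                (⟨_, h⟩ | ⟨hj, _, _⟩ | ⟨hj, _, _⟩)
              · exact Or.inl h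
              · exact absurd hj (by omega)
              · exact absurd hj (by omega)
              · exact Or.inr h
              · exact absurd hj (by omega)
              · exact absurd hj (by omega)
            have hψu : ψ (Sum.inr q) = Sum.inl q.2 := rfl
            have hφlt := hsame_of_rank _ _ hρu hlev
            rw [hψu, hψv] at hφlt
            rw [hψu]
            refine ⟨⟨?_, hφlt⟩, ⟨q.2, rfl⟩⟩
            rw [SimpleGraph.fromRel_adj]
            refine ⟨?_, hAdisj⟩
            intro hc
            simp only [Sum.inl.injEq] at hc
            exact hne (congrArg Sum.inr (Prod.ext (Fin.ext hq.symm) hc))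
        · rintro u1 ⟨-, hl1⟩ u2 ⟨-, hl2⟩ heq
          have hl1' : lev u1 = lev (Sum.inr pv : XT r' i) := hl1
          have hl2' : lev u2 = lev (Sum.inr pv : XT r' i) := hl2
          exact psi_inj_lev (hl1'.trans hl2'.symm) heq
      -- glue neighbours inject into Tr
      set χ : XT r' i → (Vp r' ⊕ Fin R.ncard) := fun u =>
        if h : und u ∈ R then Sum.inr (eR ⟨und u, h⟩) else Sum.inr ⟨0, hRpos⟩ with hχ
      have hχeq : ∀ (u : XT r' i) (h : und u ∈ R), χ u = Sum.inr (eR ⟨und u, h⟩) := by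
        intro u h
        simp only [hχ, dif_pos h]
      have hs2 : Dglue.ncard ≤ Tr.ncard := by
        refine Set.ncard_le_ncard_of_injOn χ ?_ ?_ (Set.toFinite _)
        · intro u hu
          obtain ⟨huR, hlev1, hAd⟩ := hchar u hu
          rw [hχeq u huR]
          refine ⟨⟨?_, hφ1 _ _⟩, ⟨_, rfl⟩⟩
          rw [SimpleGraph.fromRel_adj]
          refine ⟨by simp, ?_⟩
          rcases hAd with h | h
          · exact Or.inl h
          · exact Or.inr h
        · intro u1 hu1 u2 hu2 heq
          obtain ⟨h1, hl1, -⟩ := hchar u1 hu1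
          obtain ⟨h2, hl2, -⟩ := hchar u2 hu2
          rw [hχeq u1 h1, hχeq u2 h2] at heq
          simp only [Sum.inr.injEq] at heq
          have hund : und u1 = und u2 := congrArg Subtype.val (eR.injective heq)
          exact und_lev_inj (by omega) hund
      calc Dset.ncard ≤ (Dsame ∪ Dglue).ncard := Set.ncard_le_ncard hDsub (Set.toFinite _)
        _ ≤ Dsame.ncard + Dglue.ncard := Set.ncard_union_le _ _
        _ ≤ Tl.ncard + Tr.ncard := Nat.add_le_add hs1 hs2
        _ = T.ncard := hTsplit
        _ ≤ k := hφ2 (Sum.inl pv.2)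
  -- conclude
  intro s hs
  obtain ⟨v, hvs, hmax⟩ := Set.exists_max_image s ρ (Set.toFinite s) hs
  refine ⟨v, hvs, le_trans (Set.ncard_le_ncard ?_ (Set.toFinite _)) (hD v)⟩
  rintro u ⟨hus, hadj⟩
  rw [SimpleGraph.mem_neighborSet] at hadj
  refine ⟨hadj, lt_of_le_of_ne (hmax u hus) ?_⟩
  intro he
  exact hadj.ne (hρinj u v he).symm

end Stmt16

end Degen

end Aux

open Stmt16 in
theorem stmt16 {V : Type*} [Fintype V] [DecidableEq V] (k : ℕ)
    (A : V → V → Prop) (hA : ∀ u v, A u v → ¬ A v u)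
    (R : Set V) (hRne : R.Nonempty) (hRbad : BadSet A R)
    (r' : V) (hr' : r' ∉ R)
    -- the underlying undirected graph of `D_{r'×|R|}` has an `S`-last `k`-elimination
    -- ordering: all vertices of the stable set `S` come first in the ordering, and
    -- every vertex has at most `k` neighbors preceding it
    (helim : ∃ φ : ({v : V // v ≠ r'} ⊕ Fin (R.ncard)) ≃
        Fin (Fintype.card ({v : V // v ≠ r'} ⊕ Fin (R.ncard))),
      (∀ (s : Fin (R.ncard)) (w : {v : V // v ≠ r'}),
        (φ (Sum.inr s) : ℕ) < (φ (Sum.inl w) : ℕ)) ∧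
      ∀ v, ({u | (SimpleGraph.fromRel (blowup A R r')).Adj v u ∧
        (φ u : ℕ) < (φ v : ℕ)}).ncard ≤ k) :
    ∀ i : ℕ, ∃ B : Fin (Fintype.card V + i * (Fintype.card V - 1)) →
        Fin (Fintype.card V + i * (Fintype.card V - 1)) → Prop,
      (∀ u v, B u v → ¬ B v u) ∧
      Degenerate (SimpleGraph.fromRel B) k ∧
      (i + 1) * dirFvsNum A ≤ dirFvsNum B ∧
      (MinimalBadSet A R → dirFvsNum B = (i + 1) * dirFvsNum A) := by
  intro i
  have hVp : Fintype.card (Vp r') = Fintype.card V - 1 := by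
    rw [Fintype.card_subtype_compl, Fintype.card_subtype_eq]
  have hcard : Fintype.card (Fin (Fintype.card V + i * (Fintype.card V - 1)))
      = Fintype.card (XT r' i) := by
    rw [Fintype.card_fin, Fintype.card_sum, Fintype.card_prod, Fintype.card_fin, hVp]
  set e := Fintype.equivOfCardEq hcard with he
  refine ⟨fun a b => arcC A R r' i (e a) (e b), ?_, ?_, ?_, ?_⟩
  · exact fun u v h => arcC_antisymm hA i _ _ h
  · refine degenerate_equiv e ?_ (degen hRne hr' helim i)
    intro x y
    rw [SimpleGraph.fromRel_adj, SimpleGraph.fromRel_adj]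
    constructor
    · rintro ⟨hne, hd⟩
      exact ⟨fun hc => hne (e.injective hc), hd⟩
    · rintro ⟨hne, hd⟩
      exact ⟨fun hc => hne (congrArg e hc), hd⟩
  · have heq : dirFvsNum (fun a b => arcC A R r' i (e a) (e b)) = dirFvsNum (arcC A R r' i) :=
      dirFvsNum_equiv e (fun x y => Iff.rfl)
    obtain ⟨F, hFfvs, hFc⟩ := exists_isMinFVS (arcC A R r' i)
    rw [heq, ← hFc]
    exact (lower_bound hA hRbad hr' i F hFfvs).1
  · intro hmin
    have heq : dirFvsNum (fun a b => arcC A R r' i (e a) (e b)) = dirFvsNum (arcC A R r' i) :=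
      dirFvsNum_equiv e (fun x y => Iff.rfl)
    obtain ⟨Fi, hFifvs, hFicard⟩ := upper_bound hA hRne hr' hmin i
    refine le_antisymm ?_ ?_
    · rw [heq, ← hFicard]
      exact dirFvsNum_le _ hFifvs
    · obtain ⟨F, hFfvs, hFc⟩ := exists_isMinFVS (arcC A R r' i)
      rw [heq, ← hFc]
      exact (lower_bound hA hRbad hr' i F hFfvs).1
end

section
/- Let D_0 be a finite oriented graph on k vertices v₁, …, v_k with minimum feedback vertex set size f₀, and let D₁, …, D_k be finite oriented graphs with minimum feedback vertex set sizes f₁, …, f_k and nonempty bad sets R₁ ⊆ V(D₁), …, R_k ⊆ V(D_k). Let D be the oriented graph obtained from the disjoint union of D₁, …, D_k by adding, for every arc (v_i, v_j) of D_0, all arcs from vertices of R_i to vertices of R_j. Then D has n(D₁) + ⋯ + n(D_k) vertices and f(D) ≥ f₀ + f₁ + ⋯ + f_k; moreover, if R_i is a minimal bad set of D_i for each 1 ≤ i ≤ k, then f(D) = f₀ + f₁ + ⋯ + f_k. -/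
/-- The digraph obtained from the disjoint union of the digraphs `(V i, A i)` by
adding, for every arc `(v_i, v_j)` of the pattern digraph `A0`, all arcs from the
vertices of `R i` to the vertices of `R j`. -/
def glue {k : ℕ} (A0 : Fin k → Fin k → Prop) {V : Fin k → Type*}
    (A : ∀ i, V i → V i → Prop) (R : ∀ i, Set (V i)) :
    (Σ i, V i) → (Σ i, V i) → Prop :=
  fun x y =>
    (∃ h : x.1 = y.1, A y.1 (h ▸ x.2) y.2) ∨
    (x.1 ≠ y.1 ∧ A0 x.1 y.1 ∧ x.2 ∈ R x.1 ∧ y.2 ∈ R y.1)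



lemma dirFVS_univ {V : Type*} (A : V → V → Prop) : DirFVS A Set.univ := by
  intro v h
  cases h with
  | single h => exact h.1 (Set.mem_univ _)
  | tail _ h => exact h.1 (Set.mem_univ _)

lemma dirFVS_mono {V : Type*} {A : V → V → Prop} {F F' : Set V}
    (hFF : F ⊆ F') (h : DirFVS A F) : DirFVS A F' := by
  intro v hv
  exact h v (Relation.TransGen.mono (fun x y ⟨hx, hy, ha⟩ => ⟨fun m => hx (hFF m), fun m => hy (hFF m), ha⟩) _ _ hv)

lemma exists_minFVS {V : Type*} [Fintype V] (A : V → V → Prop) :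
    ∃ F : Set V, IsMinFVS A F := by
  have hne : {n | ∃ F : Set V, DirFVS A F ∧ F.ncard = n}.Nonempty :=
    ⟨(Set.univ : Set V).ncard, Set.univ, dirFVS_univ A, rfl⟩
  obtain ⟨F, hF, hc⟩ := Nat.sInf_mem hne
  exact ⟨F, hF, hc⟩

lemma dirFvsNum_le {V : Type*} [Fintype V] {A : V → V → Prop} {F : Set V}
    (h : DirFVS A F) : dirFvsNum A ≤ F.ncard :=
  Nat.sInf_le ⟨F, h, rfl⟩

lemma ncard_sigma {k : ℕ} {V : Fin k → Type*} [∀ i, Fintype (V i)]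
    (S : Set (Σ i, V i)) :
    S.ncard = ∑ i, {x | (⟨i, x⟩ : Σ i, V i) ∈ S}.ncard := by
  classical
  haveI : Fintype (Σ i, V i) := Sigma.instFintype
  rw [Set.ncard_eq_toFinset_card' S]
  have : S.toFinset = Finset.univ.sigma (fun i => {x | (⟨i, x⟩ : Σ i, V i) ∈ S}.toFinset) := by
    ext ⟨i, x⟩
    simp
  rw [this, Finset.card_sigma]
  exact Finset.sum_congr rfl fun i _ => (Set.ncard_eq_toFinset_card' _).symm

lemma glue_path {k : ℕ} (A0 : Fin k → Fin k → Prop) {V : Fin k → Type*}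
    (A : ∀ i, V i → V i → Prop) (R : ∀ i, Set (V i))
    (F : Set (Σ i, V i)) (F0 : Set (Fin k))
    (hF0R : ∀ i, i ∈ F0 → ∀ x ∈ R i, (⟨i, x⟩ : Σ i, V i) ∈ F)
    {a b : Σ i, V i}
    (h : Relation.TransGen (fun x y => x ∉ F ∧ y ∉ F ∧ glue A0 A R x y) a b) :
    (∃ x : V b.1, a = ⟨b.1, x⟩ ∧ Relation.TransGen
       (fun u w => (⟨b.1, u⟩ : Σ i, V i) ∉ F ∧ (⟨b.1, w⟩ : Σ i, V i) ∉ F ∧ A b.1 u w) x b.2) ∨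
    Relation.TransGen (fun i j => i ∉ F0 ∧ j ∉ F0 ∧ A0 i j) a.1 b.1 := by
  induction h with
  | single h =>
    obtain ⟨haF, hbF, hg⟩ := h
    rcases hg with ⟨he, ha⟩ | ⟨hne, h0, hx, hy⟩
    · obtain ⟨i, u⟩ := a
      obtain ⟨j, v⟩ := b
      dsimp at he ha ⊢
      subst he
      exact Or.inl ⟨u, rfl, Relation.TransGen.single ⟨haF, hbF, ha⟩⟩
    · refine Or.inr (Relation.TransGen.single ⟨?_, ?_, h0⟩)
      · intro hm; exact haF (by simpa [Sigma.eta] using hF0R _ hm _ hx)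
      · intro hm; exact hbF (by simpa [Sigma.eta] using hF0R _ hm _ hy)
  | tail hac step ih =>
    rename_i c b
    obtain ⟨hcF, hbF, hg⟩ := step
    rcases hg with ⟨he, ha⟩ | ⟨hne, h0, hx, hy⟩
    · obtain ⟨jc, vc⟩ := c
      obtain ⟨jb, vb⟩ := b
      dsimp at he ha ⊢
      subst he
      rcases ih with ⟨x, hax, p⟩ | p
      · exact Or.inl ⟨x, hax, p.tail ⟨hcF, hbF, ha⟩⟩
      · exact Or.inr p
    · have hcF0 : c.1 ∉ F0 := fun hm => hcF (by simpa [Sigma.eta] using hF0R _ hm _ hx)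
      have hbF0 : b.1 ∉ F0 := fun hm => hbF (by simpa [Sigma.eta] using hF0R _ hm _ hy)
      rcases ih with ⟨x, hax, p⟩ | p
      · refine Or.inr ?_
        rw [hax]
        exact Relation.TransGen.single ⟨hcF0, hbF0, h0⟩
      · exact Or.inr (p.tail ⟨hcF0, hbF0, h0⟩)

/-- Lemma B: trace of a glue-FVS is an FVS of each component. -/
lemma trace_fvs {k : ℕ} (A0 : Fin k → Fin k → Prop) {V : Fin k → Type*}
    (A : ∀ i, V i → V i → Prop) (R : ∀ i, Set (V i))
    {F : Set (Σ i, V i)} (hF : DirFVS (glue A0 A R) F) (i : Fin k) :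
    DirFVS (A i) {x | (⟨i, x⟩ : Σ i, V i) ∈ F} := by
  intro v hv
  refine hF ⟨i, v⟩ ?_
  refine hv.lift (f := fun x => (⟨i, x⟩ : Σ i, V i)) ?_
  rintro x y ⟨hx, hy, ha⟩
  exact ⟨hx, hy, Or.inl ⟨rfl, ha⟩⟩

/-- Lemma C: the set of pattern vertices whose bad set is fully inside `F`
is an FVS of the pattern. -/
lemma pattern_fvs {k : ℕ} {A0 : Fin k → Fin k → Prop}
    (hA0 : ∀ u v, A0 u v → ¬ A0 v u) {V : Fin k → Type*}
    {A : ∀ i, V i → V i → Prop} {R : ∀ i, Set (V i)} (hRne : ∀ i, (R i).Nonempty)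
    {F : Set (Σ i, V i)} (hF : DirFVS (glue A0 A R) F) :
    DirFVS A0 {i | ∀ x ∈ R i, (⟨i, x⟩ : Σ i, V i) ∈ F} := by
  classical
  set F0 : Set (Fin k) := {i | ∀ x ∈ R i, (⟨i, x⟩ : Σ i, V i) ∈ F} with hF0
  intro i hi
  have hgsel : ∀ j, ∃ x : V j, x ∈ R j ∧ (j ∉ F0 → (⟨j, x⟩ : Σ i, V i) ∉ F) := by
    intro j
    by_cases hj : j ∈ F0
    · exact ⟨(hRne j).choose, (hRne j).choose_spec, fun h => absurd hj h⟩
    · have : ∃ x ∈ R j, (⟨j, x⟩ : Σ i, V i) ∉ F := by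
        by_contra hcon
        push_neg at hcon
        exact hj (fun x hx => hcon x hx)
      obtain ⟨x, hx1, hx2⟩ := this
      exact ⟨x, hx1, fun _ => hx2⟩
  choose g hgR hgF using hgsel
  refine hF ⟨i, g i⟩ ?_
  refine hi.lift (f := fun j => (⟨j, g j⟩ : Σ i, V i)) ?_
  rintro u w ⟨hu, hw, ha⟩
  refine ⟨hgF u hu, hgF w hw, Or.inr ⟨?_, ha, hgR u, hgR w⟩⟩
  intro he
  have he' : u = w := by simpa using he
  exact hA0 u w ha (he' ▸ ha)

/-- Lemma L: a set that traces to component FVSs and swallows the bad sets of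
a pattern-FVS is an FVS of the glue. -/
lemma glue_fvs {k : ℕ} {A0 : Fin k → Fin k → Prop} {V : Fin k → Type*}
    {A : ∀ i, V i → V i → Prop} {R : ∀ i, Set (V i)}
    {F : Set (Σ i, V i)} {F0 : Set (Fin k)}
    (h0 : DirFVS A0 F0)
    (hcomp : ∀ i, DirFVS (A i) {x | (⟨i, x⟩ : Σ i, V i) ∈ F})
    (hF0R : ∀ i, i ∈ F0 → ∀ x ∈ R i, (⟨i, x⟩ : Σ i, V i) ∈ F) :
    DirFVS (glue A0 A R) F := by
  intro v hv
  rcases glue_path A0 A R F F0 hF0R hv with ⟨x, hax, p⟩ | p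
  · obtain ⟨i, u⟩ := v
    dsimp at hax p
    obtain rfl : u = x := by
      simpa using hax
    exact hcomp i u p
  · exact h0 v.1 p

lemma ncard_eq_sum_boole {k : ℕ} (F0 : Set (Fin k)) [DecidablePred (· ∈ F0)] :
    F0.ncard = ∑ i, if i ∈ F0 then 1 else 0 := by
  rw [Set.ncard_eq_toFinset_card']
  have : F0.toFinset = Finset.univ.filter (· ∈ F0) := by ext; simp
  rw [this, Finset.card_filter]


theorem stmt17 {k : ℕ} (A0 : Fin k → Fin k → Prop)
    (hA0 : ∀ u v, A0 u v → ¬ A0 v u)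
    {V : Fin k → Type*} [∀ i, Fintype (V i)]
    (A : ∀ i, V i → V i → Prop) (hA : ∀ i, ∀ u v, A i u v → ¬ A i v u)
    (R : ∀ i, Set (V i)) (hRne : ∀ i, (R i).Nonempty)
    (hRbad : ∀ i, BadSet (A i) (R i)) :
    Fintype.card (Σ i, V i) = ∑ i, Fintype.card (V i) ∧
    dirFvsNum A0 + ∑ i, dirFvsNum (A i) ≤ dirFvsNum (glue A0 A R) ∧
    ((∀ i, MinimalBadSet (A i) (R i)) →
      dirFvsNum (glue A0 A R) = dirFvsNum A0 + ∑ i, dirFvsNum (A i)) := by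
  classical
  have hlow : dirFvsNum A0 + ∑ i, dirFvsNum (A i) ≤ dirFvsNum (glue A0 A R) := by
    obtain ⟨F, hF, hFc⟩ := exists_minFVS (glue A0 A R)
    set F0 : Set (Fin k) := {i | ∀ x ∈ R i, (⟨i, x⟩ : Σ i, V i) ∈ F} with hF0def
    have hF0 : DirFVS A0 F0 := pattern_fvs hA0 hRne hF
    have h0le : dirFvsNum A0 ≤ F0.ncard := dirFvsNum_le hF0
    have hfi : ∀ i, dirFvsNum (A i) + (if i ∈ F0 then 1 else 0) ≤
        {x | (⟨i, x⟩ : Σ i, V i) ∈ F}.ncard := by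
      intro i
      have hFi := trace_fvs A0 A R hF i
      have h1 := dirFvsNum_le hFi
      by_cases hiF0 : i ∈ F0
      · simp only [hiF0, if_pos]
        rcases lt_or_eq_of_le h1 with h | h
        · omega
        · exfalso
          exact hRbad i _ ⟨hFi, h.symm⟩ (fun x hx => hiF0 x hx)
      · simpa [hiF0] using h1
    have hsum : F.ncard = ∑ i, {x | (⟨i, x⟩ : Σ i, V i) ∈ F}.ncard := ncard_sigma F
    calc dirFvsNum A0 + ∑ i, dirFvsNum (A i)
        ≤ F0.ncard + ∑ i, dirFvsNum (A i) := by omega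
      _ = ∑ i, (dirFvsNum (A i) + (if i ∈ F0 then 1 else 0)) := by
          rw [Finset.sum_add_distrib, ← ncard_eq_sum_boole]; omega
      _ ≤ ∑ i, {x | (⟨i, x⟩ : Σ i, V i) ∈ F}.ncard := Finset.sum_le_sum (fun i _ => hfi i)
      _ = dirFvsNum (glue A0 A R) := by rw [← hsum, hFc]
  refine ⟨Fintype.card_sigma, hlow, fun hmin => le_antisymm ?_ hlow⟩
  obtain ⟨F0, hF0fvs, hF0card⟩ := exists_minFVS A0
  set r : ∀ i, V i := fun i => (hRne i).choose with hrdef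
  choose Fc hFc hFcR using fun i => (hmin i).2 (r i) (hRne i).choose_spec
  set Gset : ∀ i, Set (V i) := fun i => if i ∈ F0 then insert (r i) (Fc i) else Fc i
    with hGsetdef
  set G : Set (Σ i, V i) := {x | x.2 ∈ Gset x.1} with hGdef
  have htrace : ∀ i, {x | (⟨i, x⟩ : Σ i, V i) ∈ G} = Gset i := fun i => rfl
  have hGsub : ∀ i, Fc i ⊆ Gset i := by
    intro i
    simp only [hGsetdef]
    split
    · exact Set.subset_insert _ _
    · exact subset_rfl
  have hGfvs : DirFVS (glue A0 A R) G := by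
    refine glue_fvs hF0fvs (fun i => ?_) (fun i hi x hx => ?_)
    · rw [htrace i]
      exact dirFVS_mono (hGsub i) (hFc i).1
    · show x ∈ Gset i
      simp only [hGsetdef, if_pos hi]
      by_cases hxF : x ∈ Fc i
      · exact Set.mem_insert_of_mem _ hxF
      · have : x ∈ R i \ Fc i := ⟨hx, hxF⟩
        rw [hFcR i] at this
        rw [this]
        exact Set.mem_insert _ _
  have hrFc : ∀ i, r i ∉ Fc i := by
    intro i
    have : r i ∈ R i \ Fc i := by rw [hFcR i]; rfl
    exact this.2
  have hGcard : ∀ i, (Gset i).ncard = dirFvsNum (A i) + (if i ∈ F0 then 1 else 0) := by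
    intro i
    simp only [hGsetdef]
    by_cases hi : i ∈ F0
    · rw [if_pos hi, if_pos hi, Set.ncard_insert_of_notMem (hrFc i), (hFc i).2]
    · rw [if_neg hi, if_neg hi, (hFc i).2]
      omega
  calc dirFvsNum (glue A0 A R) ≤ G.ncard := dirFvsNum_le hGfvs
    _ = ∑ i, (Gset i).ncard := by
        rw [ncard_sigma G]
        exact Finset.sum_congr rfl fun i _ => by rw [htrace i]
    _ = dirFvsNum A0 + ∑ i, dirFvsNum (A i) := by
        simp only [hGcard]
        rw [Finset.sum_add_distrib, ← ncard_eq_sum_boole, hF0card]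
        omega
end
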